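/- arXiv:1810.13198 — 6 statements merged into one kernel-verified Lean document; each statement's English description precedes it below -/
import Mathlib

section
/- For every natural number k, the (k+1)×(k+1) Hankel determinant of the Catalan numbers with (i,j) entry c_{i+j} (0 ≤ i, j ≤ k) equals 1. -/
/-- `q n h k` = number of lattice paths of `n` steps `±1` from height `h` to
height `k`, staying nonnegative throughout. -/
def q : ℕ → ℕ → ℕ → ℕ
  | 0, h, k => if h = k then 1 else 0
  | n+1, 0, k => q n 1 k
  | n+1, h+1, k => q n h k + q n (h+2) k

lemma q_zero (h k : ℕ) : q 0 h k = if h = k then 1 else 0 := by simp [q]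
lemma q_succ_zero (n k : ℕ) : q (n+1) 0 k = q n 1 k := by simp [q]
lemma q_succ_succ (n h k : ℕ) : q (n+1) (h+1) k = q n h k + q n (h+2) k := by simp [q]

lemma q_eq_zero_of_lt : ∀ n h k, n + h < k → q n h k = 0 := by
  intro n
  induction n with
  | zero => intro h k hlt; rw [q_zero, if_neg (by omega)]
  | succ n ih =>
    intro h k hlt
    match h with
    | 0 => rw [q_succ_zero]; exact ih 1 k (by omega)
    | h+1 => rw [q_succ_succ, ih h k (by omega), ih (h+2) k (by omega)]

lemma q_self : ∀ n h, q n h (h + n) = 1 := by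
  intro n
  induction n with
  | zero => intro h; rw [q_zero, if_pos (by omega)]
  | succ n ih =>
    intro h
    match h with
    | 0 =>
      rw [q_succ_zero, show 0 + (n+1) = 1 + n by omega]
      exact ih 1
    | h+1 =>
      rw [q_succ_succ, q_eq_zero_of_lt n h (h + 1 + (n + 1)) (by omega),
        show h + 1 + (n+1) = h + 2 + n by omega, ih (h+2)]

lemma q_parity : ∀ n h k, (n + h + k) % 2 = 1 → q n h k = 0 := by
  intro n
  induction n with
  | zero => intro h k hp; rw [q_zero, if_neg (by omega)]
  | succ n ih =>
    intro h k hp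
    match h with
    | 0 => rw [q_succ_zero]; exact ih 1 k (by omega)
    | h+1 => rw [q_succ_succ, ih h k (by omega), ih (h+2) k (by omega)]

/-- Recurrence peeling the last step. -/
lemma q_succ_right : ∀ n, ∀ h, q (n+1) h 0 = q n h 1 ∧
    ∀ k, q (n+1) h (k+1) = q n h k + q n h (k+2) := by
  intro n
  induction n with
  | zero =>
    intro h
    match h with
    | 0 =>
      refine ⟨by rw [q_succ_zero, q_zero, q_zero]; split_ifs <;> (try simp_all) <;> omega, ?_⟩
      intro k
      rw [q_succ_zero, q_zero, q_zero, q_zero]; split_ifs <;> (try simp_all) <;> omega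
    | h+1 =>
      refine ⟨?_, ?_⟩
      · rw [q_succ_succ, q_zero, q_zero, q_zero]; split_ifs <;> (try simp_all) <;> omega
      · intro k
        rw [q_succ_succ, q_zero, q_zero, q_zero, q_zero]; split_ifs <;> (try simp_all) <;> omega
  | succ n ih =>
    intro h
    match h with
    | 0 =>
      refine ⟨?_, ?_⟩
      · rw [q_succ_zero, (ih 1).1, q_succ_zero]
      · intro k
        rw [q_succ_zero, (ih 1).2 k, q_succ_zero, q_succ_zero]
    | h+1 =>
      refine ⟨?_, ?_⟩
      · rw [q_succ_succ, (ih h).1, (ih (h+2)).1, q_succ_succ]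
      · intro k
        rw [q_succ_succ, (ih h).2 k, (ih (h+2)).2 k, q_succ_succ, q_succ_succ]
        omega

lemma q_symm : ∀ n h k, q n h k = q n k h := by
  intro n
  induction n with
  | zero => intro h k; rw [q_zero, q_zero]; split_ifs <;> (try simp_all) <;> omega
  | succ n ih =>
    intro h k
    match h with
    | 0 => rw [q_succ_zero, (q_succ_right n k).1, ih 1 k]
    | h+1 => rw [q_succ_succ, (q_succ_right n k).2 h, ih h k, ih (h+2) k]

open Finset in
/-- Chapman–Kolmogorov splitting. -/
lemma q_add : ∀ a b h k, q (a + b) h k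
    = ∑ y ∈ Finset.range (a + h + 1), q a h y * q b y k := by
  intro a
  induction a with
  | zero =>
    intro b h k
    rw [Finset.sum_eq_single h]
    · rw [q_zero, if_pos rfl, one_mul, Nat.zero_add]
    · intro y _ hy; rw [q_zero, if_neg (Ne.symm hy), zero_mul]
    · intro hmem; exact absurd (Finset.mem_range.mpr (by omega)) hmem
  | succ a ih =>
    intro b h k
    match h with
    | 0 =>
      rw [show a + 1 + b = (a + b) + 1 by omega, q_succ_zero, ih b 1 k]
      rw [show a + 1 + 1 = a + 1 + 0 + 1 by omega]
      exact Finset.sum_congr rfl (fun y _ => by rw [q_succ_zero])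
    | h+1 =>
      rw [show a + 1 + b = (a + b) + 1 by omega, q_succ_succ, ih b h k, ih b (h+2) k]
      have hext : ∑ y ∈ range (a + h + 1), q a h y * q b y k
          = ∑ y ∈ range (a + (h+2) + 1), q a h y * q b y k := by
        apply Finset.sum_subset
        · intro x hx; simp only [mem_range] at *; omega
        · intro x _ hx
          rw [q_eq_zero_of_lt a h x (by simp only [mem_range] at *; omega), zero_mul]
      rw [hext, ← Finset.sum_add_distrib,
        show a + 1 + (h + 1) + 1 = a + (h + 2) + 1 by omega]
      exact Finset.sum_congr rfl (fun y _ => by rw [q_succ_succ]; ring)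

lemma q_closed : ∀ n m k, n + k = 2 * m →
    (q n 0 k : ℤ) = Nat.choose n m - Nat.choose n (m + 1) := by
  intro n
  induction n with
  | zero =>
    intro m k hp
    match m with
    | 0 =>
      obtain rfl : k = 0 := by omega
      rw [q_zero, if_pos rfl]; simp
    | m+1 =>
      rw [q_zero, if_neg (by omega), Nat.choose_eq_zero_of_lt (by omega),
        Nat.choose_eq_zero_of_lt (by omega)]
      simp
  | succ n ih =>
    intro m k hp
    match k with
    | 0 =>
      obtain ⟨m', rfl⟩ : ∃ m', m = m' + 1 := ⟨m - 1, by omega⟩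
      rw [(q_succ_right n 0).1, ih (m'+1) 1 (by omega)]
      have hsymm : Nat.choose n m' = Nat.choose n (m' + 1) := by
        rw [← Nat.choose_symm (by omega : m' ≤ n), show n - m' = m' + 1 by omega]
      rw [Nat.choose_succ_succ' n m', Nat.choose_succ_succ' n (m'+1)]
      push_cast
      rw [hsymm]
      ring
    | k+1 =>
      obtain ⟨m', rfl⟩ : ∃ m', m = m' + 1 := ⟨m - 1, by omega⟩
      rw [(q_succ_right n 0).2 k]
      push_cast
      rw [ih m' k (by omega), ih (m'+1) (k+2) (by omega),
        Nat.choose_succ_succ' n m', Nat.choose_succ_succ' n (m'+1)]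
      push_cast
      ring

lemma q_catalan (n : ℕ) : q (2 * n) 0 0 = catalan n := by
  have h1 : (q (2*n) 0 0 : ℤ) = Nat.choose (2*n) n - Nat.choose (2*n) (n+1) :=
    q_closed (2*n) n 0 (by omega)
  have h2 : (n + 1) * catalan n = Nat.choose (2*n) n := by
    rw [succ_mul_catalan_eq_centralBinom]; rfl
  have h3 : Nat.choose (2*n) (n+1) = n * catalan n := by
    have h4 := Nat.choose_succ_right_eq (2*n) n
    rw [show 2*n - n = n by omega, ← h2] at h4
    have h5 : Nat.choose (2*n) (n+1) * (n+1) = (n * catalan n) * (n + 1) := by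
      rw [h4]; ring
    exact Nat.eq_of_mul_eq_mul_right (by omega) h5
  have hfin : (q (2*n) 0 0 : ℤ) = catalan n := by
    rw [h1, ← h2, h3]; push_cast; ring
  exact_mod_cast hfin

open Finset in
lemma sum_even_split (g : ℕ → ℕ) (i : ℕ) :
    ∑ y ∈ range (2*i+1), g y = g (2*i) + ∑ m ∈ range i, (g (2*m) + g (2*m+1)) := by
  induction i with
  | zero => simp
  | succ i ih =>
    rw [show 2*(i+1)+1 = (2*i+1) + 1 + 1 by omega, Finset.sum_range_succ,
      Finset.sum_range_succ, ih, Finset.sum_range_succ,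
      show 2*i+1+1 = 2*(i+1) by omega]
    ring

open Finset in
lemma key (i j K : ℕ) (hi : i ≤ K) :
    catalan (i + j) = ∑ m ∈ range (K + 1), q (2*i) 0 (2*m) * q (2*j) 0 (2*m) := by
  have h1 : catalan (i + j) = ∑ y ∈ range (2*i + 0 + 1), q (2*i) 0 y * q (2*j) 0 y := by
    rw [← q_catalan (i + j), show 2*(i+j) = 2*i + 2*j by ring, q_add (2*i) (2*j) 0 0]
    exact Finset.sum_congr rfl (fun y _ => by rw [q_symm (2*j) y 0])
  rw [h1, show 2*i + 0 + 1 = 2*i + 1 by omega,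
    sum_even_split (fun y => q (2*i) 0 y * q (2*j) 0 y) i]
  have hodd : ∀ m ∈ range i, q (2*i) 0 (2*m) * q (2*j) 0 (2*m)
      + q (2*i) 0 (2*m+1) * q (2*j) 0 (2*m+1)
      = q (2*i) 0 (2*m) * q (2*j) 0 (2*m) := by
    intro m _; rw [q_parity (2*i) 0 (2*m+1) (by omega), zero_mul, add_zero]
  rw [Finset.sum_congr rfl hodd, add_comm,
    ← Finset.sum_range_succ (fun m => q (2*i) 0 (2*m) * q (2*j) 0 (2*m)) i]
  apply Finset.sum_subset
  · intro x hx; simp only [mem_range] at *; omega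
  · intro x _ hx
    rw [q_eq_zero_of_lt (2*i) 0 (2*x) (by simp only [mem_range] at *; omega), zero_mul]

/-- For every natural number k, the (k+1)×(k+1) Hankel determinant of
the Catalan numbers with (i,j) entry c_{i+j} (0 ≤ i, j ≤ k) equals 1. -/
theorem catalan_hankel_det_eq_one (k : ℕ) :
    Matrix.det (Matrix.of fun i j : Fin (k + 1) =>
      (catalan (i.val + j.val) : ℤ)) = 1 := by
  set L : Matrix (Fin (k+1)) (Fin (k+1)) ℤ :=
    Matrix.of fun i m : Fin (k+1) => (q (2 * i.val) 0 (2 * m.val) : ℤ) with hL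
  have hfact : (Matrix.of fun i j : Fin (k + 1) => (catalan (i.val + j.val) : ℤ))
      = L * L.transpose := by
    ext i j
    simp only [Matrix.mul_apply, Matrix.transpose_apply, hL, Matrix.of_apply]
    rw [Fin.sum_univ_eq_sum_range
      (fun m => ((q (2 * i.val) 0 (2 * m) : ℤ) * (q (2 * j.val) 0 (2 * m) : ℤ)))]
    have hkey := key i.val j.val k (by omega)
    have : ((catalan (i.val + j.val) : ℕ) : ℤ)
        = ((∑ m ∈ Finset.range (k + 1), q (2*i.val) 0 (2*m) * q (2*j.val) 0 (2*m) : ℕ) : ℤ) := by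
      exact_mod_cast congrArg (Nat.cast (R := ℤ)) hkey
    rw [this]
    push_cast
    rfl
  have hdiag : ∀ i : Fin (k+1), L i i = 1 := by
    intro i
    simp only [hL, Matrix.of_apply]
    have hs := q_self (2 * i.val) 0
    rw [zero_add] at hs
    rw [hs]; norm_num
  have htri : L.BlockTriangular OrderDual.toDual := by
    intro i j hij
    simp only [OrderDual.toDual_lt_toDual] at hij
    simp only [hL, Matrix.of_apply]
    rw [q_eq_zero_of_lt (2 * i.val) 0 (2 * j.val) (by omega)]
    norm_num
  rw [hfact, Matrix.det_mul, Matrix.det_transpose,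
    Matrix.det_of_lowerTriangular L htri]
  simp [hdiag]
end

section
/- For every natural number k, the (k+1)×(k+1) Hankel determinant of the shifted Catalan numbers with (i,j) entry c_{i+j+1} (0 ≤ i, j ≤ k) equals 1. -/
/-- Ballot-type numbers: `B n k = C(2n+1, n+k+1) - C(2n+1, n+k+2)`. -/
def ballotB (n k : ℕ) : ℤ :=
  (Nat.choose (2 * n + 1) (n + k + 1) : ℤ) - (Nat.choose (2 * n + 1) (n + k + 2) : ℤ)

lemma ballotB_eq_zero {n k : ℕ} (h : n < k) : ballotB n k = 0 := by
  unfold ballotB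
  rw [Nat.choose_eq_zero_of_lt (by omega), Nat.choose_eq_zero_of_lt (by omega)]
  simp

lemma ballotB_self (n : ℕ) : ballotB n n = 1 := by
  unfold ballotB
  rw [show n + n + 1 = 2 * n + 1 by ring, Nat.choose_self,
    Nat.choose_eq_zero_of_lt (by omega)]
  simp

lemma ballotB_zero_zero : ballotB 0 0 = 1 := ballotB_self 0

lemma choose_symm_mid (n : ℕ) : Nat.choose (2 * n + 1) n = Nat.choose (2 * n + 1) (n + 1) := by
  have := Nat.choose_symm (n := 2 * n + 1) (k := n + 1) (by omega)
  rw [show 2 * n + 1 - (n + 1) = n by omega] at this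
  exact this

lemma pascal2 (N m : ℕ) : ((N + 2).choose (m + 2) : ℤ)
    = (N.choose m : ℤ) + 2 * (N.choose (m + 1) : ℤ) + (N.choose (m + 2) : ℤ) := by
  rw [show N + 2 = (N + 1) + 1 by ring, show m + 2 = (m + 1) + 1 by ring,
    Nat.choose_succ_succ' (N + 1) (m + 1), Nat.choose_succ_succ' N m,
    Nat.choose_succ_succ' N (m + 1)]
  push_cast
  ring

lemma ballotB_recS (n k : ℕ) :
    ballotB (n + 1) (k + 1) = ballotB n k + 2 * ballotB n (k + 1) + ballotB n (k + 2) := by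
  unfold ballotB
  rw [show 2 * (n + 1) + 1 = (2 * n + 1) + 2 by ring,
      show n + 1 + (k + 1) + 1 = (n + k + 1) + 2 by ring,
      show n + 1 + (k + 1) + 2 = (n + k + 2) + 2 by ring,
      pascal2, pascal2]
  simp only [show n + (k + 1) + 1 = n + k + 2 by ring, show n + (k + 1) + 2 = n + k + 3 by ring,
    show n + (k + 2) + 1 = n + k + 3 by ring, show n + (k + 2) + 2 = n + k + 4 by ring,
    show n + k + 1 + 1 = n + k + 2 by ring, show n + k + 1 + 2 = n + k + 3 by ring,
    show n + k + 2 + 1 = n + k + 3 by ring, show n + k + 2 + 2 = n + k + 4 by ring]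
  ring

lemma ballotB_rec0 (n : ℕ) :
    ballotB (n + 1) 0 = 2 * ballotB n 0 + ballotB n 1 := by
  unfold ballotB
  rw [show 2 * (n + 1) + 1 = (2 * n + 1) + 2 by ring,
      show n + 1 + 0 + 1 = n + 2 by ring,
      show n + 1 + 0 + 2 = (n + 1) + 2 by ring,
      show n + 2 = n + 2 by rfl, pascal2, pascal2]
  have hs : ((2 * n + 1).choose n : ℤ) = ((2 * n + 1).choose (n + 1) : ℤ) := by
    exact_mod_cast choose_symm_mid n
  rw [show n + 0 + 1 = n + 1 by ring, show n + 0 + 2 = n + 2 by ring,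
      show n + 1 + 1 = n + 2 by ring, show n + 1 + 2 = n + 3 by ring, hs]
  ring

lemma ballotB_zero_of_ne {t : ℕ} (ht : t ≠ 0) : ballotB 0 t = 0 :=
  ballotB_eq_zero (by omega)

lemma ballotB_zero_eq_catalan (n : ℕ) : ballotB n 0 = (catalan (n + 1) : ℤ) := by
  unfold ballotB
  have key : (n + 2 : ℤ) * ((Nat.choose (2 * n + 1) (n + 0 + 1) : ℤ)
      - (Nat.choose (2 * n + 1) (n + 0 + 2) : ℤ)) = (n + 2 : ℤ) * (catalan (n + 1) : ℤ) := by
    have hc : ((n + 1) + 1) * catalan (n + 1) = (n + 1).centralBinom :=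
      succ_mul_catalan_eq_centralBinom (n + 1)
    have hcb : (n + 1).centralBinom = Nat.choose (2 * n + 2) (n + 1) := by
      show (2 * (n + 1)).choose (n + 1) = _
      rw [show 2 * (n + 1) = 2 * n + 2 by ring]
    have hpascal : Nat.choose (2 * n + 2) (n + 1)
        = Nat.choose (2 * n + 1) n + Nat.choose (2 * n + 1) (n + 1) := by
      rw [show 2 * n + 2 = (2 * n + 1) + 1 by ring, show (n+1) = n + 1 by rfl]
      exact Nat.choose_succ_succ' (2 * n + 1) n
    have hrt : Nat.choose (2 * n + 1) (n + 2) * (n + 2)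
        = Nat.choose (2 * n + 1) (n + 1) * n := by
      have := Nat.choose_succ_right_eq (2 * n + 1) (n + 1)
      rwa [show 2 * n + 1 - (n + 1) = n by omega] at this
    have hs := choose_symm_mid n
    have hrtz : (Nat.choose (2 * n + 1) (n + 2) : ℤ) * (n + 2)
        = (Nat.choose (2 * n + 1) (n + 1) : ℤ) * n := by exact_mod_cast hrt
    have hcz : ((n : ℤ) + 2) * (catalan (n + 1) : ℤ)
        = (Nat.choose (2 * n + 1) n : ℤ) + (Nat.choose (2 * n + 1) (n + 1) : ℤ) := by
      have : ((n + 1 + 1 : ℕ) : ℤ) * (catalan (n + 1) : ℤ)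
          = ((n + 1).centralBinom : ℤ) := by exact_mod_cast congrArg (Nat.cast (R := ℤ)) hc
      rw [hcb] at this
      push_cast at this ⊢
      rw [show (n : ℤ) + 2 = (n : ℤ) + 1 + 1 by ring, this]
      exact_mod_cast congrArg (Nat.cast (R := ℤ)) hpascal
    rw [hcz]
    have hsz : (Nat.choose (2 * n + 1) n : ℤ) = (Nat.choose (2 * n + 1) (n + 1) : ℤ) := by
      exact_mod_cast hs
    rw [show n + 0 + 1 = n + 1 by ring, show n + 0 + 2 = n + 2 by ring]
    linarith [hrtz, hsz]
  have h2 : (n + 2 : ℤ) ≠ 0 := by positivity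
  have := mul_left_cancel₀ h2 key
  simpa using this

/-- The bilinear sum. -/
def ballotS (m n : ℕ) : ℤ := ∑ t ∈ Finset.range (m + n + 2), ballotB m t * ballotB n t

lemma ballotS_swap (m n : ℕ) : ballotS (m + 1) n = ballotS m (n + 1) := by
  have expand : ∀ a b : ℕ,
      (∑ t ∈ Finset.range (a + b + 3), ballotB (a + 1) t * ballotB b t)
      = 2 * (ballotB a 0 * ballotB b 0) + ballotB a 1 * ballotB b 0
        + ((∑ t ∈ Finset.range (a + b + 2), ballotB a t * ballotB b (t + 1))
          + 2 * (∑ t ∈ Finset.range (a + b + 2), ballotB a (t + 1) * ballotB b (t + 1))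
          + ((∑ t ∈ Finset.range (a + b + 2), ballotB a (t + 1) * ballotB b t)
              - ballotB a 1 * ballotB b 0)) := by
    intro a b
    rw [show a + b + 3 = (a + b + 2) + 1 by ring, Finset.sum_range_succ']
    rw [ballotB_rec0]
    have hsum : ∀ t ∈ Finset.range (a + b + 2),
        ballotB (a + 1) (t + 1) * ballotB b (t + 1)
        = ballotB a t * ballotB b (t + 1) + 2 * (ballotB a (t + 1) * ballotB b (t + 1))
          + ballotB a (t + 2) * ballotB b (t + 1) := by
      intro t _
      rw [ballotB_recS]; ring
    rw [Finset.sum_congr rfl hsum, Finset.sum_add_distrib, Finset.sum_add_distrib,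
      ← Finset.mul_sum]
    have hshift : (∑ t ∈ Finset.range (a + b + 2), ballotB a (t + 2) * ballotB b (t + 1))
        = (∑ t ∈ Finset.range (a + b + 2), ballotB a (t + 1) * ballotB b t)
          - ballotB a 1 * ballotB b 0 := by
      have h1 : (∑ t ∈ Finset.range (a + b + 3), ballotB a (t + 1) * ballotB b t)
          = (∑ t ∈ Finset.range (a + b + 2), ballotB a (t + 2) * ballotB b (t + 1))
            + ballotB a 1 * ballotB b 0 := by
        rw [show a + b + 3 = (a + b + 2) + 1 by ring, Finset.sum_range_succ']
      have h2 : (∑ t ∈ Finset.range (a + b + 3), ballotB a (t + 1) * ballotB b t)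
          = (∑ t ∈ Finset.range (a + b + 2), ballotB a (t + 1) * ballotB b t) := by
        rw [show a + b + 3 = (a + b + 2) + 1 by ring, Finset.sum_range_succ,
          ballotB_eq_zero (show a < a + b + 2 + 1 by omega)]
        ring
      linarith
    rw [hshift]; ring
  have l1 : ballotS (m + 1) n
      = ∑ t ∈ Finset.range (m + n + 3), ballotB (m + 1) t * ballotB n t := by
    unfold ballotS
    rw [show m + 1 + n + 2 = m + n + 3 by omega]
  have l2 : ballotS m (n + 1)
      = ∑ t ∈ Finset.range (n + m + 3), ballotB (n + 1) t * ballotB m t := by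
    unfold ballotS
    rw [show m + (n + 1) + 2 = n + m + 3 by ring]
    exact Finset.sum_congr rfl fun t _ => mul_comm _ _
  rw [l1, l2, expand m n, expand n m]
  have hc : ∀ (f g : ℕ → ℤ) (N : ℕ), (∑ t ∈ Finset.range N, f t * g t)
      = ∑ t ∈ Finset.range N, g t * f t :=
    fun f g N => Finset.sum_congr rfl fun t _ => mul_comm _ _
  rw [show n + m + 2 = m + n + 2 by ring]
  rw [hc (fun t => ballotB n t) (fun t => ballotB m (t + 1)),
      hc (fun t => ballotB n (t + 1)) (fun t => ballotB m (t + 1)),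
      hc (fun t => ballotB n (t + 1)) (fun t => ballotB m t)]
  ring

lemma ballotS_eq_catalan (m n : ℕ) : ballotS m n = (catalan (m + n + 1) : ℤ) := by
  induction m generalizing n with
  | zero =>
    unfold ballotS
    rw [show 0 + n + 2 = (n + 1) + 1 by ring, Finset.sum_range_succ']
    have : ∀ t ∈ Finset.range (n + 1), ballotB 0 (t + 1) * ballotB n (t + 1) = 0 := by
      intro t _
      rw [ballotB_zero_of_ne (by omega)]; ring
    rw [Finset.sum_congr rfl this, Finset.sum_const_zero, ballotB_zero_zero,
      ballotB_zero_eq_catalan]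
    simp
  | succ m ih =>
    rw [show m + 1 + n + 1 = m + (n + 1) + 1 by omega]
    exact (ballotS_swap m n).trans (ih (n + 1))

lemma ballot_sum_eq_catalan {m n K : ℕ} (hm : m < K) :
    (∑ t ∈ Finset.range K, ballotB m t * ballotB n t) = (catalan (m + n + 1) : ℤ) := by
  have stable : ∀ L, m < L →
      (∑ t ∈ Finset.range L, ballotB m t * ballotB n t)
      = ∑ t ∈ Finset.range (m + 1), ballotB m t * ballotB n t := by
    intro L hL
    rw [← Finset.sum_subset (Finset.range_subset_range.mpr (by omega : m + 1 ≤ L))]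
    intro t _ ht
    have hmt : m < t := by by_contra hc; exact ht (Finset.mem_range.mpr (by omega))
    rw [ballotB_eq_zero hmt]
    ring
  rw [stable K hm, ← stable (m + n + 2) (by omega)]
  exact ballotS_eq_catalan m n

/-- For every natural number k, the (k+1)×(k+1) Hankel determinant of
the shifted Catalan numbers with (i,j) entry c_{i+j+1} (0 ≤ i, j ≤ k) equals 1. -/
theorem catalan_shifted_hankel_det_eq_one (k : ℕ) :
    Matrix.det (Matrix.of fun i j : Fin (k + 1) =>
      (catalan (i.val + j.val + 1) : ℤ)) = 1 := by
  set L : Matrix (Fin (k + 1)) (Fin (k + 1)) ℤ :=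
    Matrix.of fun i j : Fin (k + 1) => ballotB i.val j.val with hL
  have hfact : (Matrix.of fun i j : Fin (k + 1) =>
      (catalan (i.val + j.val + 1) : ℤ)) = L * L.transpose := by
    ext i j
    rw [Matrix.mul_apply]
    simp only [hL, Matrix.transpose_apply, Matrix.of_apply]
    rw [Fin.sum_univ_eq_sum_range (fun t => ballotB i.val t * ballotB j.val t) (k + 1)]
    exact (ballot_sum_eq_catalan (by omega : i.val < k + 1)).symm
  have hdetL : L.det = 1 := by
    have htri : L.BlockTriangular OrderDual.toDual := by
      intro i j hij
      simp only [hL, Matrix.of_apply]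
      exact ballotB_eq_zero (by exact_mod_cast hij)
    rw [Matrix.det_of_lowerTriangular L htri]
    have : ∀ i : Fin (k + 1), L i i = 1 := fun i => ballotB_self i.val
    simp [this]
  rw [hfact, Matrix.det_mul, Matrix.det_transpose, hdetL]
  ring
end

section
/- For every natural number k ≥ 1, the (k+1)×(k+1) determinant with (i,j) entry c_{i+j} (0 ≤ i, j ≤ k) equals the k×k determinant with (i,j) entry c_{i+j+1} (0 ≤ i, j ≤ k−1); that is, H_{2k} = H_{2k−1} for the Hankel determinants of the Catalan numbers. -/
open Finset Matrix

/-- Number of nonnegative lattice paths of length `m` ending at height `h`. -/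
def pf : ℕ → ℕ → ℕ
  | 0, 0 => 1
  | 0, _+1 => 0
  | m+1, 0 => pf m 1
  | m+1, h+1 => pf m h + pf m (h+2)

lemma pf_zero_of_lt : ∀ m h, m < h → pf m h = 0
  | 0, _+1, _ => rfl
  | m+1, h+1, hlt => by
      simp [pf, pf_zero_of_lt m h (by omega), pf_zero_of_lt m (h+2) (by omega)]

lemma pf_diag : ∀ m, pf m m = 1
  | 0 => rfl
  | m+1 => by simp [pf, pf_diag m, pf_zero_of_lt m (m+2) (by omega)]

lemma pf_zero_of_odd : ∀ m h, (m + h) % 2 = 1 → pf m h = 0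
  | 0, 0, h => by omega
  | 0, _+1, _ => rfl
  | m+1, 0, hp => pf_zero_of_odd m 1 (by omega)
  | m+1, h+1, hp => by
      simp [pf, pf_zero_of_odd m h (by omega), pf_zero_of_odd m (h+2) (by omega)]

lemma pf_closed : ∀ m h, (m + h) % 2 = 0 →
    (pf m h : ℤ) = (m.choose ((m+h)/2) : ℤ) - m.choose ((m+h)/2 + 1)
  | 0, 0, _ => by simp [pf]
  | 0, h+1, hp => by
      have h1 : 1 ≤ (0+(h+1))/2 := by omega
      show ((0:ℕ) : ℤ) = _
      rw [Nat.choose_eq_zero_of_lt (by omega), Nat.choose_eq_zero_of_lt (by omega)]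
      simp
  | m+1, 0, hp => by
      obtain ⟨t, rfl⟩ : ∃ t, m = 2*t+1 := ⟨m/2, by omega⟩
      have h1 : (2*t+1+1+0)/2 = t+1 := by omega
      have h2 : (2*t+1+1)/2 = t+1 := by omega
      have ih := pf_closed (2*t+1) 1 (by omega)
      have h3 : (2*t+1+1)/2 = t+1 := by omega
      rw [h3] at ih
      show (pf (2*t+1) 1 : ℤ) = _
      rw [h1, ih]
      have hs : (2*t+1).choose t = (2*t+1).choose (t+1) := by
        have := Nat.choose_symm (show t ≤ 2*t+1 by omega)
        simpa [show 2*t+1-t = t+1 by omega] using this.symm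
      rw [show (2*t+1+1 : ℕ) = (2*t+1)+1 from rfl, Nat.choose_succ_succ (2*t+1) t,
        Nat.choose_succ_succ (2*t+1) (t+1)]
      push_cast
      rw [← hs]
      ring
  | m+1, h+1, hp => by
      have ih1 := pf_closed m h (by omega)
      have ih2 := pf_closed m (h+2) (by omega)
      have h1 : (m+1+(h+1))/2 = (m+h)/2 + 1 := by omega
      have h2 : (m+(h+2))/2 = (m+h)/2 + 1 := by omega
      rw [h2] at ih2
      show ((pf m h + pf m (h+2) : ℕ) : ℤ) = _
      push_cast
      rw [ih1, ih2, h1, Nat.choose_succ_succ m ((m+h)/2),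
        Nat.choose_succ_succ m ((m+h)/2 + 1)]
      push_cast
      ring

lemma pf_expand (a b N : ℕ) (hN : a + 2 ≤ N) :
    ∑ h ∈ range N, pf (a+1) h * pf b h =
    ∑ h ∈ range N, pf a h * pf b (h+1) + ∑ h ∈ range N, pf a (h+1) * pf b h := by
  obtain ⟨N', rfl⟩ : ∃ N', N = N' + 1 := ⟨N-1, by omega⟩
  rw [Finset.sum_range_succ' (fun h => pf (a+1) h * pf b h),
      Finset.sum_range_succ (fun h => pf a h * pf b (h+1)),
      Finset.sum_range_succ' (fun h => pf a (h+1) * pf b h)]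
  have hz : pf a N' = 0 := pf_zero_of_lt a N' (by omega)
  simp only [pf, add_mul, Finset.sum_add_distrib, hz, zero_mul]
  ring

lemma pf_transfer (a b N : ℕ) (h1 : a+2 ≤ N) (h2 : b+2 ≤ N) :
    ∑ h ∈ range N, pf (a+1) h * pf b h = ∑ h ∈ range N, pf a h * pf (b+1) h := by
  rw [pf_expand a b N h1]
  have h3 := pf_expand b a N h2
  simp only [mul_comm] at h3 ⊢
  rw [h3]
  ring

lemma pf_conv : ∀ a b N, a + b + 2 ≤ N →
    ∑ h ∈ range N, pf a h * pf b h = pf (a+b) 0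
  | 0, b, N, hN => by
      rw [Finset.sum_eq_single 0]
      · simp [pf]
      · intro h _ hh
        obtain ⟨h', rfl⟩ : ∃ h', h = h' + 1 := ⟨h-1, by omega⟩
        simp [pf]
      · intro habs
        exact absurd (Finset.mem_range.2 (by omega)) habs
  | a+1, b, N, hN => by
      rw [pf_transfer a b N (by omega) (by omega),
        pf_conv a (b+1) N (by omega)]
      congr 1
      omega

lemma pf_catalan (n : ℕ) : pf (2*n) 0 = catalan n := by
  have h := pf_closed (2*n) 0 (by omega)
  have h1 : (2*n+0)/2 = n := by omega
  rw [h1] at h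
  have key : ((n:ℤ)+1) * (pf (2*n) 0 : ℤ) = ((n:ℤ)+1) * (catalan n : ℤ) := by
    rw [h]
    have hc : ((2*n).choose (n+1) : ℤ) * ((n:ℤ)+1) = ((2*n).choose n : ℤ) * n := by
      have := Nat.choose_succ_right_eq (2*n) n
      rw [show 2*n - n = n by omega] at this
      exact_mod_cast congrArg (fun x : ℕ => (x : ℤ)) this
    have hcb : ((n:ℤ)+1) * (catalan n : ℤ) = ((2*n).choose n : ℤ) := by
      have := succ_mul_catalan_eq_centralBinom n
      have h2 : Nat.centralBinom n = (2*n).choose n := rfl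
      rw [h2] at this
      exact_mod_cast congrArg (fun x : ℕ => (x : ℤ)) this
    rw [hcb]
    linarith [hc]
  have := mul_left_cancel₀ (show ((n:ℤ)+1) ≠ 0 by positivity) key
  exact_mod_cast this

lemma sum_range_two_mul {M : Type*} [AddCommMonoid M] (f : ℕ → M) :
    ∀ m, ∑ h ∈ range (2*m), f h = ∑ r ∈ range m, (f (2*r) + f (2*r+1))
  | 0 => by simp
  | m+1 => by
      rw [Finset.sum_range_succ, show 2*(m+1) = 2*m+1+1 by ring,
        Finset.sum_range_succ, Finset.sum_range_succ, sum_range_two_mul f m]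
      rw [add_assoc]

lemma pf_entry_even (k i j : ℕ) (hi : i ≤ k) (hj : j ≤ k) :
    catalan (i+j) = ∑ r ∈ range (k+1), pf (2*i) (2*r) * pf (2*j) (2*r) := by
  have h1 : catalan (i+j) = ∑ h ∈ range (2*(2*k+1)), pf (2*i) h * pf (2*j) h := by
    rw [pf_conv (2*i) (2*j) (2*(2*k+1)) (by omega), ← pf_catalan (i+j)]
    congr 1
    omega
  rw [h1, sum_range_two_mul]
  have h2 : ∀ r ∈ range (2*k+1),
      pf (2*i) (2*r) * pf (2*j) (2*r) + pf (2*i) (2*r+1) * pf (2*j) (2*r+1)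
      = pf (2*i) (2*r) * pf (2*j) (2*r) := by
    intro r _
    rw [pf_zero_of_odd (2*i) (2*r+1) (by omega)]
    simp
  rw [Finset.sum_congr rfl h2]
  rw [← Finset.sum_subset (Finset.range_subset_range.2 (show k+1 ≤ 2*k+1 by omega))]
  intro x hx hx2
  simp only [Finset.mem_range] at hx hx2
  rw [pf_zero_of_lt (2*i) (2*x) (by omega)]
  simp

lemma pf_entry_odd (k i j : ℕ) (hi : i < k) (hj : j < k) :
    catalan (i+j+1) = ∑ r ∈ range k, pf (2*i+1) (2*r+1) * pf (2*j+1) (2*r+1) := by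
  have h1 : catalan (i+j+1) = ∑ h ∈ range (2*(2*k+1)), pf (2*i+1) h * pf (2*j+1) h := by
    rw [pf_conv (2*i+1) (2*j+1) (2*(2*k+1)) (by omega), ← pf_catalan (i+j+1)]
    congr 1
    omega
  rw [h1, sum_range_two_mul]
  have h2 : ∀ r ∈ range (2*k+1),
      pf (2*i+1) (2*r) * pf (2*j+1) (2*r) + pf (2*i+1) (2*r+1) * pf (2*j+1) (2*r+1)
      = pf (2*i+1) (2*r+1) * pf (2*j+1) (2*r+1) := by
    intro r _
    rw [pf_zero_of_odd (2*i+1) (2*r) (by omega)]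
    simp
  rw [Finset.sum_congr rfl h2]
  rw [← Finset.sum_subset (Finset.range_subset_range.2 (show k ≤ 2*k+1 by omega))]
  intro x hx hx2
  simp only [Finset.mem_range] at hx hx2
  rw [pf_zero_of_lt (2*i+1) (2*x+1) (by omega)]
  simp

lemma det_one_of_factor {n : ℕ} (M : Matrix (Fin n) (Fin n) ℤ)
    (B : Matrix (Fin n) (Fin n) ℤ)
    (hM : M = B * Bᵀ) (hlow : ∀ i j : Fin n, i < j → B i j = 0)
    (hdiag : ∀ i : Fin n, B i i = 1) : M.det = 1 := by
  rw [hM, Matrix.det_mul, Matrix.det_transpose]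
  have : B.det = 1 := by
    rw [Matrix.det_of_lowerTriangular B (fun i j hij => hlow i j hij)]
    simp [hdiag]
  rw [this]; ring



/-- For every natural number k ≥ 1, the (k+1)×(k+1) determinant with
(i,j) entry c_{i+j} equals the k×k determinant with (i,j) entry c_{i+j+1};
that is, H_{2k} = H_{2k-1} for the Hankel determinants of the Catalan numbers. -/
theorem catalan_hankel_even_eq_odd (k : ℕ) (hk : 1 ≤ k) :
    Matrix.det (Matrix.of fun i j : Fin (k + 1) =>
      (catalan (i.val + j.val) : ℤ)) =
    Matrix.det (Matrix.of fun i j : Fin k =>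
      (catalan (i.val + j.val + 1) : ℤ)) := by
  have heven : Matrix.det (Matrix.of fun i j : Fin (k + 1) =>
      (catalan (i.val + j.val) : ℤ)) = 1 := by
    apply det_one_of_factor _ (Matrix.of fun i r : Fin (k+1) => (pf (2*i.val) (2*r.val) : ℤ))
    · ext i j
      simp only [Matrix.mul_apply, Matrix.transpose_apply, Matrix.of_apply]
      rw [Fin.sum_univ_eq_sum_range (fun r => ((pf (2*i.val) (2*r) : ℤ) * (pf (2*j.val) (2*r) : ℤ)))]
      rw [pf_entry_even k i.val j.val (by omega) (by omega)]
      push_cast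
      rfl
    · intro i j hij
      simp only [Matrix.of_apply]
      rw [pf_zero_of_lt (2*i.val) (2*j.val) (by exact_mod_cast by omega)]
      · rfl
    · intro i
      simp [pf_diag]
  have hodd : Matrix.det (Matrix.of fun i j : Fin k =>
      (catalan (i.val + j.val + 1) : ℤ)) = 1 := by
    apply det_one_of_factor _ (Matrix.of fun i r : Fin k => (pf (2*i.val+1) (2*r.val+1) : ℤ))
    · ext i j
      simp only [Matrix.mul_apply, Matrix.transpose_apply, Matrix.of_apply]
      rw [Fin.sum_univ_eq_sum_range (fun r => ((pf (2*i.val+1) (2*r+1) : ℤ) * (pf (2*j.val+1) (2*r+1) : ℤ)))]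
      rw [pf_entry_odd k i.val j.val (by omega) (by omega)]
      push_cast
      rfl
    · intro i j hij
      simp only [Matrix.of_apply]
      rw [pf_zero_of_lt (2*i.val+1) (2*j.val+1) (by exact_mod_cast by omega)]
      · rfl
    · intro i
      simp [pf_diag]
  rw [heven, hodd]
end

section
/- The exponential generating function f of the Catalan numbers satisfies the linear differential equation t·f''(t) + 2(1 − 2t)·f'(t) − 2·f(t) = 0 for every real t, together with f(0) = 1. -/
/-!
The coefficients of the series `t f'' + 2 (1 - 2t) f' - 2 f` are
`(n + 2) c (n + 1) - (4n + 2) c n` times `tⁿ / n!`, which vanish by the two-term recurrence of the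
Catalan numbers. Since `cₙ ≤ 4ⁿ`, the series converges on all of `ℝ` and may be differentiated
term by term.
-/

open scoped Nat

/-- The exponential generating function of the Catalan numbers. -/
noncomputable def catalanEGF (t : ℝ) : ℝ := ∑' n : ℕ, (catalan n : ℝ) * t ^ n / n !

noncomputable def egf (a : ℕ → ℝ) (t : ℝ) : ℝ := ∑' n, a n * t ^ n / n !

theorem egf_zero (a : ℕ → ℝ) : egf a 0 = a 0 := by
  rw [egf, tsum_eq_single 0 fun n hn => by simp [zero_pow hn]]
  simp

def ExpBounded (a : ℕ → ℝ) : Prop := ∃ C R : ℝ, ∀ n, |a n| ≤ C * R ^ n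

theorem natCast_succ_mul_div_factorial_succ (n : ℕ) (x : ℝ) :
    ((n + 1 : ℕ) : ℝ) * x / (n + 1)! = x / n ! := by
  rw [Nat.factorial_succ, Nat.cast_mul, mul_div_mul_left _ _ (by positivity)]

section

variable {a : ℕ → ℝ}

theorem ExpBounded.shift (ha : ExpBounded a) : ExpBounded (fun n => a (n + 1)) := by
  obtain ⟨C, R, h⟩ := ha
  exact ⟨C * R, R, fun n => by simpa [pow_succ', mul_assoc] using h (n + 1)⟩

theorem ExpBounded.abs (ha : ExpBounded a) : ExpBounded (fun n => |a n|) := by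
  simpa only [ExpBounded, abs_abs] using ha

theorem ExpBounded.summable_egf (ha : ExpBounded a) (t : ℝ) :
    Summable (fun n => a n * t ^ n / n !) := by
  obtain ⟨C, R, h⟩ := ha
  refine .of_norm_bounded ((Real.summable_pow_div_factorial (R * |t|)).mul_left C) fun n => ?_
  rw [norm_div, norm_mul, norm_pow, Real.norm_eq_abs, Real.norm_eq_abs, Real.norm_natCast,
    mul_pow, ← mul_div_assoc, ← mul_assoc]
  gcongr
  exact h n

theorem ExpBounded.hasSum_egf (ha : ExpBounded a) (t : ℝ) :
    HasSum (fun n => a n * t ^ n / n !) (egf a t) :=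
  (ha.summable_egf t).hasSum

theorem ExpBounded.hasSum_mul_egf_shift (ha : ExpBounded a) (t : ℝ) :
    HasSum (fun n => n * a n * t ^ n / n !) (t * egf (fun n => a (n + 1)) t) := by
  have h : HasSum (fun n => ((n + 1 : ℕ) : ℝ) * a (n + 1) * t ^ (n + 1) / (n + 1)!)
      (t * egf (fun n => a (n + 1)) t) :=
    ((ha.shift.hasSum_egf t).mul_left t).congr_fun fun n => by
      rw [mul_comm _ (a _), mul_assoc, mul_div_assoc, natCast_succ_mul_div_factorial_succ]
      ring
  have h0 := (hasSum_nat_add_iff (f := fun n : ℕ => (n : ℝ) * a n * t ^ n / n !) 1).mp h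
  rwa [Finset.sum_range_one, Nat.cast_zero, zero_mul, zero_mul, zero_div, add_zero] at h0

theorem ExpBounded.hasSum_deriv_egf_terms (ha : ExpBounded a) (t : ℝ) :
    HasSum (fun n => a n * (n * t ^ (n - 1)) / n !) (egf (fun n => a (n + 1)) t) := by
  have h := (hasSum_nat_add_iff (f := fun n : ℕ => a n * (n * t ^ (n - 1)) / n !) 1).mp <|
    (ha.shift.hasSum_egf t).congr_fun fun n => by
      rw [Nat.add_sub_cancel, mul_div_assoc, natCast_succ_mul_div_factorial_succ, mul_div_assoc]
  rwa [Finset.sum_range_one, Nat.cast_zero, zero_mul, mul_zero, zero_div, add_zero] at h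

theorem ExpBounded.hasDerivAt_egf (ha : ExpBounded a) (t : ℝ) :
    HasDerivAt (egf a) (egf (fun n => a (n + 1)) t) t := by
  set r := |t| + 1
  have hr : t ∈ Metric.ball 0 r := by simp [r]
  have hbound : ∀ n, ∀ y ∈ Metric.ball 0 r,
      ‖a n * (n * y ^ (n - 1)) / (n ! : ℝ)‖ ≤ |a n| * (n * r ^ (n - 1)) / n ! := by
    intro n y hy
    rw [mem_ball_zero_iff, Real.norm_eq_abs] at hy
    simp only [norm_div, norm_mul, norm_pow, Real.norm_eq_abs, Nat.abs_cast]
    gcongr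
  have key := hasDerivAt_tsum_of_isPreconnected (ha.abs.hasSum_deriv_egf_terms r).summable
    Metric.isOpen_ball (convex_ball 0 r).isPreconnected
    (fun n y _ => ((hasDerivAt_pow n y).const_mul (a n)).div_const (n ! : ℝ)) hbound
    (Metric.mem_ball_self (by positivity)) (ha.summable_egf 0) hr
  exact key.congr_deriv (ha.hasSum_deriv_egf_terms t).tsum_eq

end

theorem catalan_le_four_pow (n : ℕ) : catalan n ≤ 4 ^ n :=
  (Nat.le_mul_of_pos_left _ n.succ_pos).trans
    ((succ_mul_catalan_eq_centralBinom n).trans_le (Nat.centralBinom_le_four_pow n))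

theorem expBounded_catalan : ExpBounded (fun n => (catalan n : ℝ)) :=
  ⟨1, 4, fun n => by
    rw [Nat.abs_cast, one_mul]
    exact_mod_cast catalan_le_four_pow n⟩

theorem add_two_mul_catalan_succ (n : ℕ) :
    (n + 2) * catalan (n + 1) = (4 * n + 2) * catalan n := by
  refine Nat.eq_of_mul_eq_mul_left n.succ_pos ?_
  calc (n + 1) * ((n + 2) * catalan (n + 1)) = (n + 1) * (n + 1).centralBinom := by
        rw [← succ_mul_catalan_eq_centralBinom]
    _ = 2 * (2 * n + 1) * n.centralBinom := Nat.succ_mul_centralBinom_succ n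
    _ = (n + 1) * ((4 * n + 2) * catalan n) := by
        rw [← succ_mul_catalan_eq_centralBinom]; ring

/-- The exponential generating function f of the Catalan numbers
satisfies t·f''(t) + 2(1 − 2t)·f'(t) − 2·f(t) = 0 for every real t, and f(0) = 1. -/
theorem catalan_egf_ode :
    (∀ t : ℝ, t * iteratedDeriv 2 catalanEGF t
        + 2 * (1 - 2 * t) * deriv catalanEGF t - 2 * catalanEGF t = 0)
    ∧ catalanEGF 0 = 1 := by
  set c : ℕ → ℝ := fun n => catalan n
  have hc : ExpBounded c := expBounded_catalan
  have hf : catalanEGF = egf c := rfl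
  have hf' : deriv catalanEGF = egf (fun n => c (n + 1)) :=
    funext fun t => (hc.hasDerivAt_egf t).deriv
  have hf'' : iteratedDeriv 2 catalanEGF = egf (fun n => c (n + 2)) := by
    rw [iteratedDeriv_succ, iteratedDeriv_one, hf']
    exact funext fun t => (hc.shift.hasDerivAt_egf t).deriv
  refine ⟨fun t => ?_, by rw [hf, egf_zero]; simp [c]⟩
  have hrec (n : ℕ) : ((n : ℝ) + 2) * c (n + 1) = (4 * n + 2) * c n := by
    simp only [c]; exact_mod_cast add_two_mul_catalan_succ n
  have hsum := ((hc.shift.hasSum_mul_egf_shift t).add ((hc.shift.hasSum_egf t).mul_left 2)).sub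
    (((hc.hasSum_mul_egf_shift t).mul_left 4).add ((hc.hasSum_egf t).mul_left 2))
  have hzero := hsum.unique <| hasSum_zero.congr_fun fun n => by
    linear_combination (t ^ n / n !) * hrec n
  rw [hf'', hf', hf]
  linear_combination hzero
end

section
/- For every real t, the exponential generating function of the Catalan numbers satisfies f(t) = e^{2t}·(g(2t) − g'(2t)), where g is the modified Bessel function of order zero. -/
open scoped Nat

/-- The modified Bessel function of order zero,
`I₀(z) = Σ_{n≥0} z^(2n) / (4^n (n!)^2)`. -/
noncomputable def besselI0 (z : ℝ) : ℝ := ∑' n : ℕ, z ^ (2 * n) / (4 ^ n * (n !) ^ 2)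

/-!
Write `e^{2t} = Σ 2^n t^n / n!` and `g(2t) - g'(2t) = Σ (-1)^n C(n, ⌊n/2⌋) t^n / n!`, the even
terms coming from `g` and the odd ones from `g'`. The product of these exponential generating
functions has as `n`-th coefficient the binomial convolution
`Σ_k C(n, k) 2^k (-1)^(n-k) C(n-k, ⌊(n-k)/2⌋)`, which is the coefficient of `X^(n+1)` in
`(X - 1)(1 + X)^(2n) = (X - 1)(2X + (1 + X^2))^n`, that is `C(2n, n) - C(2n, n+1) = c_n`.
-/

open Polynomial Finset

def signedCentralBinom (n : ℕ) : ℤ := (-1) ^ n * n.choose (n / 2)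

theorem coeff_one_add_X_sq_pow {R : Type*} [CommSemiring R] (j k : ℕ) :
    ((1 + X ^ 2 : R[X]) ^ j).coeff k = if 2 ∣ k then (j.choose (k / 2) : R) else 0 := by
  have : (1 + X ^ 2 : R[X]) ^ j = expand R 2 ((1 + X) ^ j) := by simp
  rw [this, coeff_expand two_pos, coeff_one_add_X_pow]

theorem coeff_X_sub_one_mul_one_add_X_sq_pow (j : ℕ) :
    ((X - 1) * (1 + X ^ 2) ^ j : ℤ[X]).coeff (j + 1) = signedCentralBinom j := by
  rw [sub_mul, coeff_sub, coeff_X_mul, one_mul, coeff_one_add_X_sq_pow,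
    coeff_one_add_X_sq_pow, signedCentralBinom]
  rcases Nat.even_or_odd' j with ⟨m, rfl | rfl⟩ <;> have hodd : ¬ 2 ∣ 2 * m + 1 := by omega
  · simp [hodd]
  · simp [hodd, pow_succ, Nat.choose_symm_half, show 2 * m + 1 + 1 = 2 * (m + 1) by ring,
      show (2 * m + 1) / 2 = m by omega]

theorem catalan_eq_choose_sub_choose (n : ℕ) :
    (catalan n : ℤ) = (2 * n).choose n - (2 * n).choose (n + 1) := by
  have hcat : ((n + 1 : ℕ) : ℤ) * catalan n = (2 * n).choose n := by
    rw [← Nat.cast_mul, succ_mul_catalan_eq_centralBinom, Nat.centralBinom_eq_two_mul_choose]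
  have hsucc : ((2 * n).choose (n + 1) : ℤ) * (n + 1) = (2 * n).choose n * n := by
    have := Nat.choose_succ_right_eq (2 * n) n
    rw [show 2 * n - n = n by omega] at this
    exact_mod_cast this
  push_cast at hcat
  apply mul_left_cancel₀ (show (n + 1 : ℤ) ≠ 0 by positivity)
  linear_combination hcat + hsucc

theorem catalan_eq_sum_choose_mul_signedCentralBinom (n : ℕ) :
    (catalan n : ℤ) =
      ∑ k ∈ range (n + 1), (n.choose k : ℤ) * 2 ^ k * signedCentralBinom (n - k) := by
  have hpoly : (X - 1) * (1 + X : ℤ[X]) ^ (2 * n) = ∑ k ∈ range (n + 1),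
      C ((n.choose k : ℤ) * 2 ^ k) * ((X - 1) * (1 + X ^ 2) ^ (n - k)) * X ^ k := by
    rw [pow_mul, show (1 + X : ℤ[X]) ^ 2 = 2 * X + (1 + X ^ 2) by ring, add_pow, mul_sum]
    refine sum_congr rfl fun k _ => ?_
    simp only [C_mul, C_pow, map_natCast, C_ofNat]
    ring
  have := congrArg (coeff · (n + 1)) hpoly
  rw [sub_mul, coeff_sub, coeff_X_mul, one_mul, coeff_one_add_X_pow, coeff_one_add_X_pow,
    finsetSum_coeff] at this
  rw [catalan_eq_choose_sub_choose, this]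
  refine sum_congr rfl fun k hk => ?_
  have hk : k ≤ n := Nat.lt_succ_iff.mp (mem_range.mp hk)
  rw [coeff_mul_X_pow', if_pos (by omega), coeff_C_mul, show n + 1 - k = n - k + 1 by omega,
    coeff_X_sub_one_mul_one_add_X_sq_pow]

theorem hasDerivAt_tsum_mul_pow {𝕜 : Type*} [RCLike 𝕜] {a : ℕ → 𝕜}
    (ha : ∀ r : ℝ, Summable fun n => ‖a n‖ * r ^ n) (x : 𝕜) :
    HasDerivAt (fun y => ∑' n, a n * y ^ n) (∑' n, (n + 1) * a (n + 1) * x ^ n) x := by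
  set R : ℝ := ‖x‖ + 1
  have hR : 1 ≤ R := by simp [R]
  have hbound : ∀ n, ∀ y ∈ Metric.ball (0 : 𝕜) R,
      ‖a n * (n * y ^ (n - 1))‖ ≤ ‖a n‖ * (2 * R) ^ n := by
    intro n y hy
    have hy : ‖y‖ ≤ R := by simpa using (Metric.mem_ball.mp hy).le
    rw [norm_mul, norm_mul, norm_pow, RCLike.norm_natCast, mul_pow]
    gcongr
    · exact_mod_cast Nat.lt_two_pow_self.le
    · exact (pow_le_pow_left₀ (norm_nonneg y) hy _).trans (pow_le_pow_right₀ hR (by omega))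
  have hx : x ∈ Metric.ball (0 : 𝕜) R := by simp [R]
  have hderiv := hasDerivAt_tsum_of_isPreconnected (ha (2 * R)) Metric.isOpen_ball
    (convex_ball 0 R).isPreconnected (g := fun n y => a n * y ^ n)
    (fun n y _ => (hasDerivAt_pow n y).const_mul (a n)) hbound
    (Metric.mem_ball_self (by linarith))
    (summable_of_ne_finset_zero (s := {0}) (by simp +contextual)) hx
  rw [(Summable.of_norm_bounded (ha (2 * R)) fun n => hbound n x hx).tsum_eq_zero_add,
    Nat.cast_zero, zero_mul, mul_zero, zero_add] at hderiv
  refine hderiv.congr_deriv (tsum_congr fun n => ?_)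
  rw [add_tsub_cancel_right]
  push_cast
  ring

theorem summable_norm_mul_pow_div_factorial {𝕜 : Type*} [RCLike 𝕜] {a : ℕ → 𝕜} {C : ℝ}
    (ha : ∀ n, ‖a n‖ ≤ C ^ n) (x : 𝕜) : Summable fun n => ‖a n * x ^ n / (n ! : 𝕜)‖ := by
  refine (Real.summable_pow_div_factorial (C * ‖x‖)).of_nonneg_of_le (fun _ => norm_nonneg _)
    fun n => ?_
  rw [norm_div, norm_mul, norm_pow, RCLike.norm_natCast, mul_pow]
  gcongr
  exact ha n

theorem tsum_mul_tsum_eq_tsum_sum_choose_of_summable_norm {𝕜 : Type*} [NormedField 𝕜]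
    [CompleteSpace 𝕜] [CharZero 𝕜] {a b : ℕ → 𝕜} {x : 𝕜}
    (ha : Summable fun n => ‖a n * x ^ n / (n ! : 𝕜)‖)
    (hb : Summable fun n => ‖b n * x ^ n / (n ! : 𝕜)‖) :
    (∑' n, a n * x ^ n / (n ! : 𝕜)) * (∑' n, b n * x ^ n / (n ! : 𝕜)) =
      ∑' n, (∑ k ∈ range (n + 1), n.choose k * a k * b (n - k)) * x ^ n / (n ! : 𝕜) := by
  rw [tsum_mul_tsum_eq_tsum_sum_range_of_summable_norm ha hb]
  refine tsum_congr fun n => ?_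
  rw [sum_mul, sum_div]
  refine sum_congr rfl fun k hk => ?_
  obtain ⟨j, rfl⟩ := Nat.exists_eq_add_of_le (Nat.lt_succ_iff.mp (mem_range.mp hk))
  rw [Nat.cast_choose 𝕜 (Nat.le_add_right k j), Nat.add_sub_cancel_left, pow_add]
  have : ((k + j)! : 𝕜) ≠ 0 := Nat.cast_ne_zero.mpr (Nat.factorial_ne_zero _)
  field_simp

theorem summable_norm_inv_factorial_sq_mul_pow (r : ℝ) :
    Summable fun n => ‖((n ! : ℝ) ^ 2)⁻¹‖ * r ^ n := by
  refine .of_norm_bounded (Real.summable_pow_div_factorial |r|) fun n => ?_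
  have h1 : (1 : ℝ) ≤ n ! := by exact_mod_cast n.factorial_pos
  rw [norm_mul, norm_norm, norm_inv, norm_pow, RCLike.norm_natCast, Real.norm_eq_abs,
    abs_pow, inv_mul_eq_div]
  gcongr
  nlinarith

theorem besselI0_eq_tsum (z : ℝ) : besselI0 z = ∑' n, ((n ! : ℝ) ^ 2)⁻¹ * (z ^ 2 / 4) ^ n := by
  refine tsum_congr fun n => ?_
  rw [pow_mul, div_pow]
  ring

theorem hasDerivAt_besselI0 (z : ℝ) :
    HasDerivAt besselI0 (z / 2 * ∑' n, (z ^ 2 / 4) ^ n / (n ! * (n + 1)! : ℝ)) z := by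
  have hF := hasDerivAt_tsum_mul_pow summable_norm_inv_factorial_sq_mul_pow (z ^ 2 / 4)
  have hsq : HasDerivAt (fun y : ℝ => y ^ 2 / 4) (z / 2) z := by
    refine ((hasDerivAt_pow 2 z).div_const 4).congr_deriv ?_
    norm_num
    ring
  rw [show besselI0 = _ from funext besselI0_eq_tsum]
  refine (hF.comp z hsq).congr_deriv ?_
  rw [mul_comm]
  congr 1
  refine tsum_congr fun n => ?_
  rw [Nat.factorial_succ]
  push_cast
  field_simp

theorem norm_signedCentralBinom_le (n : ℕ) : ‖(signedCentralBinom n : ℝ)‖ ≤ 2 ^ n := by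
  rw [Real.norm_eq_abs, signedCentralBinom, Int.cast_mul, abs_mul, Int.cast_pow, Int.cast_neg,
    Int.cast_one, abs_pow, abs_neg, abs_one, one_pow, one_mul, Int.cast_natCast, Nat.abs_cast]
  exact_mod_cast n.choose_le_two_pow _

theorem besselI0_two_mul_sub_deriv (t : ℝ) :
    besselI0 (2 * t) - deriv besselI0 (2 * t) =
      ∑' n, (signedCentralBinom n : ℝ) * t ^ n / (n ! : ℝ) := by
  have hs := (summable_norm_mul_pow_div_factorial norm_signedCentralBinom_le t).of_norm
  have heven : ∑' m, (signedCentralBinom (2 * m) : ℝ) * t ^ (2 * m) / ((2 * m)! : ℝ)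
      = besselI0 (2 * t) := by
    refine tsum_congr fun m => ?_
    rw [signedCentralBinom, Nat.mul_div_cancel_left _ two_pos]
    push_cast
    rw [Nat.cast_choose ℝ (by omega : m ≤ 2 * m), show 2 * m - m = m by omega, mul_pow,
      pow_mul (2 : ℝ)]
    field_simp
    norm_num
  have hodd : ∑' m, (signedCentralBinom (2 * m + 1) : ℝ) * t ^ (2 * m + 1) / ((2 * m + 1)! : ℝ)
      = -deriv besselI0 (2 * t) := by
    rw [(hasDerivAt_besselI0 _).deriv, ← tsum_mul_left, ← tsum_neg]
    refine tsum_congr fun m => ?_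
    rw [signedCentralBinom, show (2 * m + 1) / 2 = m by omega]
    push_cast
    rw [Nat.cast_choose ℝ (by omega : m ≤ 2 * m + 1),
      show 2 * m + 1 - m = m + 1 by omega, pow_succ, pow_mul]
    field_simp
    ring
  rw [← tsum_even_add_odd (f := fun n => (signedCentralBinom n : ℝ) * t ^ n / (n ! : ℝ))
    (hs.comp_injective (mul_right_injective₀ two_ne_zero))
    (hs.comp_injective ((add_left_injective 1).comp (mul_right_injective₀ two_ne_zero))),
    heven, hodd]
  ring

/-- For every real t, the exponential generating function of the
Catalan numbers satisfies f(t) = e^{2t}·(g(2t) − g'(2t)), where g is the modified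
Bessel function of order zero. -/
theorem catalan_egf_eq_bessel (t : ℝ) :
    catalanEGF t = Real.exp (2 * t) * (besselI0 (2 * t) - deriv besselI0 (2 * t)) := by
  have hexp : Real.exp (2 * t) = ∑' n, (2 : ℝ) ^ n * t ^ n / (n ! : ℝ) := by
    rw [Real.exp_eq_exp_ℝ, NormedSpace.exp_eq_tsum_div]
    exact tsum_congr fun n => by rw [mul_pow]
  have hpow : ∀ n, ‖(2 : ℝ) ^ n‖ ≤ 2 ^ n := fun n => by simp
  rw [hexp, besselI0_two_mul_sub_deriv, catalanEGF,
    tsum_mul_tsum_eq_tsum_sum_choose_of_summable_norm (summable_norm_mul_pow_div_factorial hpow t)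
      (summable_norm_mul_pow_div_factorial norm_signedCentralBinom_le t)]
  refine tsum_congr fun n => ?_
  rw [← Int.cast_natCast, catalan_eq_sum_choose_mul_signedCentralBinom]
  push_cast
  rfl
end

section
/- Let f be the exponential generating function of the Catalan numbers. Then f(t)·√(−π t) tends to 1 as t → −∞; that is, f(t) is asymptotic to 1/√(−π t) as t → −∞. -/
/-!
The Catalan numbers are moments: `cₙ = (2/π) ∫₀¹ (4u)ⁿ √(1-u)/√u du`, a Beta integral
`B(n + 1/2, 3/2)`. Summing the exponential series under the integral gives
`f(t) = (2/π) ∫₀¹ e^{4tu} √(1-u)/√u du`. For `t = -T/4` the substitution `v = Tu` turns this into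
`(2/π) T^{-1/2} ∫₀^T e^{-v} √(1 - v/T)/√v dv`, and by dominated convergence the last integral
tends to `Γ(1/2) = √π` as `T → ∞`.
-/

open scoped Nat
open MeasureTheory Set Filter Real Topology

theorem integral_exp_mul_eq_tsum {μ : Measure ℝ} {f : ℝ → ℝ} (hf : Integrable f μ) {R : ℝ}
    (hR : ∀ᵐ x ∂μ, |x| ≤ R) (c : ℝ) :
    ∫ x, exp (c * x) * f x ∂μ = ∑' n : ℕ, c ^ n / n ! * ∫ x, x ^ n * f x ∂μ := by
  have hpow_int (n : ℕ) : Integrable (fun x => x ^ n * f x) μ :=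
    hf.bdd_mul (c := R ^ n) (continuous_pow n).aestronglyMeasurable <| hR.mono fun x hx => by
      rw [norm_pow, Real.norm_eq_abs]; exact pow_le_pow_left₀ (abs_nonneg x) hx n
  have hnorm_le (n : ℕ) : ∫ x, ‖c ^ n / n ! * (x ^ n * f x)‖ ∂μ ≤
      (|c| * R) ^ n / n ! * ∫ x, ‖f x‖ ∂μ := by
    rw [← integral_const_mul]
    refine integral_mono_ae ((hpow_int n).const_mul _).norm (hf.norm.const_mul _) ?_
    filter_upwards [hR] with x hx
    rw [norm_mul, norm_mul, norm_div, norm_pow, norm_pow, Real.norm_natCast, Real.norm_eq_abs,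
      Real.norm_eq_abs, mul_pow, ← mul_assoc, mul_div_right_comm]
    gcongr
  have hsum : Summable fun n : ℕ => ∫ x, ‖c ^ n / n ! * (x ^ n * f x)‖ ∂μ :=
    .of_nonneg_of_le (fun n => integral_nonneg fun x => norm_nonneg _) hnorm_le
      ((Real.summable_pow_div_factorial _).mul_right _)
  simp_rw [← integral_const_mul]
  rw [integral_tsum_of_summable_integral_norm (fun n => (hpow_int n).const_mul _) hsum]
  congr 1 with x
  rw [Real.exp_eq_exp_ℝ, NormedSpace.exp_eq_tsum_div, ← tsum_mul_right]
  congr 1 with n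
  ring

theorem Complex.ofReal_rpow_mul_one_sub_rpow {a b u : ℝ} (hu₀ : 0 ≤ u) (hu₁ : u ≤ 1) :
    ((u ^ (a - 1) * (1 - u) ^ (b - 1) : ℝ) : ℂ) =
      (u : ℂ) ^ ((a : ℂ) - 1) * (1 - (u : ℂ)) ^ ((b : ℂ) - 1) := by
  rw [Complex.ofReal_mul, Complex.ofReal_cpow hu₀, Complex.ofReal_cpow (by linarith)]
  norm_cast

theorem integrableOn_rpow_mul_one_sub_rpow {a b : ℝ} (ha : 0 < a) (hb : 0 < b) :
    IntegrableOn (fun u : ℝ => u ^ (a - 1) * (1 - u) ^ (b - 1)) (Ioc 0 1) := by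
  have h := Complex.betaIntegral_convergent (u := a) (v := b) (by simpa) (by simpa)
  rw [intervalIntegrable_iff_integrableOn_Ioc_of_le zero_le_one] at h
  refine IntegrableOn.congr_fun h.re (fun u hu => ?_) measurableSet_Ioc
  simp only [← Complex.ofReal_rpow_mul_one_sub_rpow hu.1.le hu.2, RCLike.re_to_complex,
    Complex.ofReal_re]

theorem integral_rpow_mul_one_sub_rpow {a b : ℝ} (ha : 0 < a) (hb : 0 < b) :
    ∫ u in Ioc (0 : ℝ) 1, u ^ (a - 1) * (1 - u) ^ (b - 1) =
      Gamma a * Gamma b / Gamma (a + b) := by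
  apply Complex.ofReal_injective
  rw [← integral_complex_ofReal, setIntegral_congr_fun measurableSet_Ioc
      fun u hu => Complex.ofReal_rpow_mul_one_sub_rpow hu.1.le hu.2,
    ← intervalIntegral.integral_of_le zero_le_one, ← Complex.betaIntegral,
    Complex.betaIntegral_eq_Gamma_mul_div _ _ (by simpa) (by simpa), ← Complex.ofReal_add,
    Complex.Gamma_ofReal, Complex.Gamma_ofReal, Complex.Gamma_ofReal]
  norm_cast

theorem Real.Gamma_nat_add_half_mul_factorial (n : ℕ) :
    Gamma (n + 1 / 2) * n ! = (2 * n)! * √π / 4 ^ n := by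
  have h := Real.Gamma_mul_Gamma_add_half (n + 1 / 2)
  have h2 : (2 : ℝ) ^ (1 - 2 * (n + 1 / 2 : ℝ)) = (4 ^ n)⁻¹ := by
    rw [show 1 - 2 * (n + 1 / 2 : ℝ) = -(2 * n : ℕ) by push_cast; ring,
      Real.rpow_neg zero_le_two, Real.rpow_natCast, pow_mul]
    norm_num
  rw [h2, show (n : ℝ) + 1 / 2 + 1 / 2 = n + 1 by ring,
    show 2 * ((n : ℝ) + 1 / 2) = (2 * n : ℕ) + 1 by push_cast; ring,
    Real.Gamma_nat_eq_factorial, Real.Gamma_nat_eq_factorial] at h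
  rw [h]
  ring

theorem cast_catalan_eq_factorial_div {K : Type*} [Field K] [CharZero K] (n : ℕ) :
    (catalan n : K) = (2 * n)! / (n ! * (n + 1)!) := by
  have h := congrArg (Nat.cast (R := K)) (succ_mul_catalan_eq_centralBinom n)
  rw [Nat.centralBinom_eq_two_mul_choose, Nat.cast_choose K (by omega : n ≤ 2 * n),
    show 2 * n - n = n by omega, eq_div_iff (by simp [Nat.factorial_ne_zero])] at h
  rw [eq_div_iff (by simp [Nat.factorial_ne_zero]), Nat.factorial_succ]
  push_cast at h ⊢
  linear_combination h

/-- Up to the scaling `x = 4u`, the density of the free Poisson (Marchenko–Pastur) law, whose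
moments are the Catalan numbers. -/
noncomputable def catalanWeight (u : ℝ) : ℝ := √(1 - u) / √u

theorem pow_mul_catalanWeight_eq {u : ℝ} (hu : u ∈ Ioc (0 : ℝ) 1) (n : ℕ) :
    u ^ n * catalanWeight u = u ^ ((n + 1 / 2 : ℝ) - 1) * (1 - u) ^ ((3 / 2 : ℝ) - 1) := by
  rw [catalanWeight, Real.rpow_sub hu.1, Real.rpow_add hu.1, Real.rpow_natCast, Real.rpow_one,
    show (3 / 2 : ℝ) - 1 = 1 / 2 by norm_num, ← Real.sqrt_eq_rpow, ← Real.sqrt_eq_rpow]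
  have : 0 < √u := Real.sqrt_pos.mpr hu.1
  field_simp
  rw [Real.sq_sqrt hu.1.le, mul_div_cancel_right₀ _ hu.1.ne']

theorem integrableOn_catalanWeight : IntegrableOn catalanWeight (Ioc 0 1) := by
  refine (integrableOn_rpow_mul_one_sub_rpow (a := 1 / 2) (b := 3 / 2) (by norm_num)
    (by norm_num)).congr_fun (fun u hu => ?_) measurableSet_Ioc
  simpa using (pow_mul_catalanWeight_eq hu 0).symm

theorem integral_pow_mul_catalanWeight (n : ℕ) :
    ∫ u in Ioc (0 : ℝ) 1, u ^ n * catalanWeight u = π / 2 * catalan n / 4 ^ n := by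
  rw [setIntegral_congr_fun measurableSet_Ioc fun u hu => pow_mul_catalanWeight_eq hu n,
    integral_rpow_mul_one_sub_rpow (by positivity) (by norm_num),
    show (n + 1 / 2 : ℝ) + 3 / 2 = (n + 1 : ℕ) + 1 by push_cast; ring,
    Real.Gamma_nat_eq_factorial, show (3 / 2 : ℝ) = 1 / 2 + 1 by norm_num,
    Real.Gamma_add_one (by norm_num), Real.Gamma_one_half_eq, cast_catalan_eq_factorial_div,
    eq_div_iff_mul_eq (by positivity : (n ! : ℝ) ≠ 0) |>.mpr
      (Real.Gamma_nat_add_half_mul_factorial n)]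
  field_simp
  rw [Real.sq_sqrt pi_pos.le]

theorem catalanEGF_eq_integral (t : ℝ) :
    catalanEGF t = 2 / π * ∫ u in Ioc (0 : ℝ) 1, exp (4 * t * u) * catalanWeight u := by
  have hbound : ∀ᵐ u ∂volume.restrict (Ioc (0 : ℝ) 1), |u| ≤ 1 :=
    ae_restrict_of_forall_mem measurableSet_Ioc fun u hu => abs_le.mpr ⟨by linarith [hu.1], hu.2⟩
  rw [integral_exp_mul_eq_tsum integrableOn_catalanWeight hbound, ← tsum_mul_left, catalanEGF]
  congr 1 with n
  rw [integral_pow_mul_catalanWeight]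
  field_simp
  ring

/- Since `Real.sqrt` vanishes on negative numbers, `√(1 - v / T)` cuts the integral off at
`v = T`, so the substituted integral can be taken over all of `(0, ∞)`. -/
theorem integral_exp_neg_mul_catalanWeight {T : ℝ} (hT : 0 < T) :
    ∫ u in Ioc (0 : ℝ) 1, exp (-(T * u)) * catalanWeight u =
      (√T)⁻¹ * ∫ v in Ioi (0 : ℝ), exp (-v) * √(1 - v / T) / √v := by
  have hscale : ∀ u ∈ Ioi (0 : ℝ), exp (-(T * u)) * catalanWeight u =
      √T * (exp (-(T * u)) * √(1 - T * u / T) / √(T * u)) := by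
    intro u hu
    have : 0 < √T := Real.sqrt_pos.mpr hT
    rw [Real.sqrt_mul hT.le, mul_div_cancel_left₀ u hT.ne', catalanWeight]
    field_simp
  rw [← setIntegral_eq_of_subset_of_forall_sdiff_eq_zero measurableSet_Ioi Ioc_subset_Ioi_self
      fun u hu => ?_, setIntegral_congr_fun measurableSet_Ioi hscale, integral_const_mul,
    integral_comp_mul_left_Ioi (fun v => exp (-v) * √(1 - v / T) / √v) 0 hT,
    mul_zero, smul_eq_mul, ← mul_assoc]
  · rw [← div_eq_mul_inv, Real.sqrt_div_self', one_div]
  · have : 1 < u := by simpa using hu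
    rw [catalanWeight, Real.sqrt_eq_zero'.mpr (by linarith), zero_div, mul_zero]

theorem tendsto_integral_exp_neg_mul_sqrt_one_sub_div_div_sqrt :
    Tendsto (fun T => ∫ v in Ioi (0 : ℝ), exp (-v) * √(1 - v / T) / √v) atTop (𝓝 √π) := by
  have hGamma : ∀ v ∈ Ioi (0 : ℝ), exp (-v) * v ^ ((1 / 2 : ℝ) - 1) = exp (-v) / √v := by
    intro v hv
    rw [Real.rpow_sub hv, Real.rpow_one, ← Real.sqrt_eq_rpow, Real.sqrt_div_self', mul_one_div]
  have hint : IntegrableOn (fun v : ℝ => exp (-v) / √v) (Ioi 0) :=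
    (Real.GammaIntegral_convergent one_half_pos).congr_fun hGamma measurableSet_Ioi
  rw [← Real.Gamma_one_half_eq, Real.Gamma_eq_integral one_half_pos,
    setIntegral_congr_fun measurableSet_Ioi hGamma]
  refine tendsto_integral_filter_of_dominated_convergence _ ?_ ?_ hint ?_
  · exact Eventually.of_forall fun T =>
      (by fun_prop : Measurable fun v : ℝ => exp (-v) * √(1 - v / T) / √v).aestronglyMeasurable
  · filter_upwards [eventually_gt_atTop 0] with T hT
    filter_upwards [ae_restrict_mem measurableSet_Ioi] with v hv
    have hsqrt_le : √(1 - v / T) ≤ 1 :=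
      Real.sqrt_le_one.mpr (by linarith [div_pos (show 0 < v from hv) hT])
    rw [Real.norm_eq_abs, abs_of_nonneg (by positivity)]
    gcongr
    exact mul_le_of_le_one_right (exp_pos _).le hsqrt_le
  · refine Eventually.of_forall fun v => ?_
    have h := (((tendsto_const_nhds (x := v)).div_atTop tendsto_id).const_sub 1).sqrt
    simpa using (h.const_mul (exp (-v))).div_const (√v)

theorem catalanEGF_mul_sqrt_neg_pi_mul {t : ℝ} (ht : t < 0) :
    catalanEGF t * √(-(π * t)) =
      (∫ v in Ioi (0 : ℝ), exp (-v) * √(1 - v / (-4 * t)) / √v) / √π := by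
  have hT : 0 < -4 * t := by linarith
  have hsqrt_T : √(-4 * t) = 2 * √(-t) := by
    rw [show -4 * t = 2 ^ 2 * -t by ring, Real.sqrt_mul (by norm_num), Real.sqrt_sq zero_le_two]
  simp_rw [catalanEGF_eq_integral, show ∀ u, 4 * t * u = -(-4 * t * u) from fun u => by ring]
  rw [integral_exp_neg_mul_catalanWeight hT, hsqrt_T, show -(π * t) = π * -t by ring,
    Real.sqrt_mul pi_pos.le]
  generalize ∫ v in Ioi (0 : ℝ), exp (-v) * √(1 - v / (-4 * t)) / √v = J
  have : 0 < √(-t) := Real.sqrt_pos.mpr (by linarith)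
  have : 0 < √π := Real.sqrt_pos.mpr pi_pos
  field_simp
  rw [Real.sq_sqrt pi_pos.le, mul_comm]

/-- For the exponential generating function f of the Catalan numbers,
f(t)·√(−π t) tends to 1 as t → −∞; i.e. f(t) ∼ 1/√(−π t) as t → −∞. -/
theorem catalan_egf_asymptotic_atBot :
    Filter.Tendsto (fun t : ℝ => catalanEGF t * Real.sqrt (-(Real.pi * t)))
      Filter.atBot (nhds 1) := by
  have hlim := (tendsto_integral_exp_neg_mul_sqrt_one_sub_div_div_sqrt.comp
    (tendsto_id.const_mul_atBot_of_neg (by norm_num : (-4 : ℝ) < 0))).div_const √π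
  rw [div_self (Real.sqrt_pos.mpr pi_pos).ne'] at hlim
  refine hlim.congr' ?_
  filter_upwards [eventually_lt_atBot 0] with t ht
  exact (catalanEGF_mul_sqrt_neg_pi_mul ht).symm
end
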